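/- arXiv:2003.01884 — 5 statements merged into one kernel-verified Lean document; each statement's English description precedes it below -/
import Mathlib

section
/- Let γ_1 : ℝ^d → ℝ be continuous and suppose γ_k : ℝ^d → ℝ are defined recursively for k ≥ 2 by γ_k(v) = sup over w ∈ ℝ^d, u ∈ (0,1) of [u·γ_{k-1}((v−w)/u) + u·γ_1((v−w)/u) + (1−u)·γ_1(w/(1−u))], assuming all suprema are finite. If γ_1(αv) ≥ γ_1(v) for all v ∈ ℝ^d and α ∈ [0,1], then for every k ≥ 1, γ_k(αv) ≥ γ_k(v) for all v ∈ ℝ^d and α ∈ [0,1]. -/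
open Real

/-- If `γ 1` satisfies the radial monotonicity `γ 1 (α • v) ≥ γ 1 v` for `α ∈ [0,1]`
and the `γ k` are defined by the variational recursion, then every `γ k` satisfies
the same radial monotonicity. -/
theorem gammak_radial_monotone (d : ℕ)
    (γ : ℕ → EuclideanSpace ℝ (Fin d) → ℝ)
    (hcont : Continuous (γ 1))
    (hbdd : ∀ k : ℕ, 2 ≤ k → ∀ v, BddAbove {x : ℝ |
      ∃ w : EuclideanSpace ℝ (Fin d), ∃ u : ℝ, 0 < u ∧ u < 1 ∧
        x = u * γ (k - 1) (u⁻¹ • (v - w)) + u * γ 1 (u⁻¹ • (v - w))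
          + (1 - u) * γ 1 ((1 - u)⁻¹ • w)})
    (hrec : ∀ k : ℕ, 2 ≤ k → ∀ v, γ k v = sSup {x : ℝ |
      ∃ w : EuclideanSpace ℝ (Fin d), ∃ u : ℝ, 0 < u ∧ u < 1 ∧
        x = u * γ (k - 1) (u⁻¹ • (v - w)) + u * γ 1 (u⁻¹ • (v - w))
          + (1 - u) * γ 1 ((1 - u)⁻¹ • w)})
    (hmono1 : ∀ v : EuclideanSpace ℝ (Fin d), ∀ α : ℝ, 0 ≤ α → α ≤ 1 →
      γ 1 v ≤ γ 1 (α • v)) :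
    ∀ k : ℕ, 1 ≤ k → ∀ v : EuclideanSpace ℝ (Fin d), ∀ α : ℝ, 0 ≤ α → α ≤ 1 →
      γ k v ≤ γ k (α • v) := by
  intro k hk
  induction k, hk using Nat.le_induction with
  | base => exact hmono1
  | succ k hk ih =>
    intro v α hα0 hα1
    have h2 : 2 ≤ k + 1 := by omega
    rw [hrec _ h2 v, hrec _ h2 (α • v)]
    have hk1 : k + 1 - 1 = k := rfl
    apply csSup_le
    · exact ⟨_, 0, 1/2, by norm_num, by norm_num, rfl⟩
    · rintro x ⟨w, u, hu0, hu1, rfl⟩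
      have e1 : u⁻¹ • (α • v - α • w) = α • (u⁻¹ • (v - w)) := by
        rw [← smul_sub, smul_comm]
      have e2 : (1 - u)⁻¹ • (α • w) = α • ((1 - u)⁻¹ • w) := smul_comm _ _ _
      have hmem : u * γ (k + 1 - 1) (u⁻¹ • (α • v - α • w))
          + u * γ 1 (u⁻¹ • (α • v - α • w))
          + (1 - u) * γ 1 ((1 - u)⁻¹ • (α • w)) ∈ {x : ℝ |
        ∃ w' : EuclideanSpace ℝ (Fin d), ∃ u' : ℝ, 0 < u' ∧ u' < 1 ∧
          x = u' * γ (k + 1 - 1) (u'⁻¹ • (α • v - w')) + u' * γ 1 (u'⁻¹ • (α • v - w'))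
            + (1 - u') * γ 1 ((1 - u')⁻¹ • w')} := ⟨α • w, u, hu0, hu1, rfl⟩
      refine le_trans ?_ (le_csSup (hbdd _ h2 (α • v)) hmem)
      rw [hk1, e1, e2]
      have h1u : (0:ℝ) ≤ 1 - u := by linarith
      gcongr
      · exact ih _ _ hα0 hα1
      · exact hmono1 _ _ hα0 hα1
      · exact hmono1 _ _ hα0 hα1
end

section
/- Let γ_1 : ℝ^d → ℝ be continuous, attaining its maximum only at 0 with γ_1(0) > 0, and satisfying γ_1(v) ≤ a − ‖v‖²/a for all v (for some constant a > 0). Let v ∈ ℝ^d with ‖v‖ > 0 and γ_1(v) ≥ 0. Then there exist k ∈ ℕ and u ∈ (0,1) such that u·γ_1(0) + ((1−u)/k)·γ_1(v/(1−u)) > γ_1(v). -/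
open Real

/-- Intermittency away from the effective drift: for `γ₁` continuous with strict unique
maximum at `0`, `γ₁ 0 > 0`, quadratic decay `γ₁ v ≤ a − ‖v‖²/a`, and any `v ≠ 0` with
`γ₁ v ≥ 0`, there exist `k ∈ ℕ` and `u ∈ (0,1)` with
`u γ₁(0) + ((1−u)/k) γ₁(v/(1−u)) > γ₁ v`. -/
theorem intermittency_exists_k (d : ℕ)
    (γ₁ : EuclideanSpace ℝ (Fin d) → ℝ)
    (hcont : Continuous γ₁)
    (hmax : ∀ v, γ₁ v ≤ γ₁ 0)
    (hstrict : ∀ v, v ≠ 0 → γ₁ v < γ₁ 0)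
    (hpos : 0 < γ₁ 0)
    (a : ℝ) (ha : 0 < a)
    (hdecay : ∀ v, γ₁ v ≤ a - ‖v‖ ^ 2 / a)
    (v : EuclideanSpace ℝ (Fin d)) (hv : 0 < ‖v‖) (hγv : 0 ≤ γ₁ v) :
    ∃ k : ℕ, 0 < k ∧ ∃ u : ℝ, 0 < u ∧ u < 1 ∧
      γ₁ v < u * γ₁ 0 + ((1 - u) / k) * γ₁ ((1 - u)⁻¹ • v) := by
  have hv0 : v ≠ 0 := by simpa [norm_pos_iff] using hv
  have hlt : γ₁ v < γ₁ 0 := hstrict v hv0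
  set u : ℝ := (γ₁ v + γ₁ 0) / (2 * γ₁ 0) with hu
  have hu0 : 0 < u := by
    apply div_pos <;> linarith
  have hu1 : u < 1 := by
    rw [hu, div_lt_one (by linarith)]; linarith
  have hug : u * γ₁ 0 = (γ₁ v + γ₁ 0) / 2 := by
    rw [hu]; field_simp
  have hgap : γ₁ v < u * γ₁ 0 := by rw [hug]; linarith
  set c : ℝ := γ₁ ((1 - u)⁻¹ • v) with hc
  set gap : ℝ := u * γ₁ 0 - γ₁ v with hgapdef
  have hgap0 : 0 < gap := by simp [hgapdef]; linarith
  obtain ⟨k, hk⟩ := exists_nat_gt ((1 - u) * |c| / gap)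
  have hnn : 0 ≤ (1 - u) * |c| / gap :=
    div_nonneg (mul_nonneg (by linarith) (abs_nonneg _)) hgap0.le
  have hk0 : 0 < k := by
    by_contra h
    push_neg at h
    interval_cases k
    · simp at hk; linarith
  refine ⟨k, hk0, u, hu0, hu1, ?_⟩
  have hkR : (0 : ℝ) < k := by exact_mod_cast hk0
  have h1 : (1 - u) * |c| < gap * k := by
    have := (div_lt_iff₀ hgap0).mp hk
    linarith [this]
  have h2 : -((1 - u) * |c| / k) ≤ ((1 - u) / k) * c := by
    rw [div_mul_eq_mul_div, ← neg_div]
    apply div_le_div_of_nonneg_right ?_ hkR.le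
    nlinarith [neg_abs_le c, hu1]
  have h3 : (1 - u) * |c| / k < gap := by
    rw [div_lt_iff₀ hkR]; linarith
  have : -gap < ((1 - u) / k) * c := by linarith
  simp only [hgapdef] at this
  linarith
end

section
/- Let γ_1 : ℝ^d → ℝ be continuous with unique maximizer 0 and γ_1(0) > 0. Fix k ≥ 2 and ε ∈ (0,1). Then there exists δ > 0 such that for all v with ‖v‖ < δ, all w ∈ ℝ^d, and all u ∈ [0, 1−ε): k·u·γ_1((v−w)/u) + (1−u)·γ_1(w/(1−u)) < k·γ_1(v), where for u = 0 the first term is interpreted as 0. -/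
open Filter Topology

/-!
Every value of `γ₁` is at most `γ₁ 0`, so the left-hand side is at most
`(1 + (k - 1) u) γ₁ 0 ≤ (k - (k - 1) ε) γ₁ 0`, a bound that no longer depends on `v`, `w`
or `u`. As `γ₁ 0 > 0` and `k > 1`, this is strictly below `k γ₁ 0`, so by continuity it is
also strictly below `k γ₁ v` for `v` near `0`.
-/

theorem mul_add_one_sub_mul_le {k u ε a b M : ℝ} (hk : 1 ≤ k) (hε : 0 ≤ ε) (hu₀ : 0 ≤ u)
    (hu : u < 1 - ε) (ha : a ≤ M) (hb : b ≤ M) (hM : 0 ≤ M) :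
    k * u * a + (1 - u) * b ≤ (k - (k - 1) * ε) * M := by
  have hku : k * u * a ≤ k * u * M := by gcongr
  have h1u : (1 - u) * b ≤ (1 - u) * M := by gcongr; linarith
  have hweight : (k - 1) * u * M ≤ (k - 1) * (1 - ε) * M := by gcongr
  linarith

theorem eventually_mul_add_one_sub_mul_lt {E : Type*} [TopologicalSpace E] [AddCommGroup E]
    [Module ℝ E] {γ : E → ℝ} (hcont : ContinuousAt γ 0) (hmax : ∀ v, γ v ≤ γ 0)
    (hpos : 0 < γ 0) {k ε : ℝ} (hk : 1 < k) (hε : 0 < ε) :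
    ∀ᶠ v in 𝓝 0, ∀ w : E, ∀ u : ℝ, 0 ≤ u → u < 1 - ε →
      k * u * γ (u⁻¹ • (v - w)) + (1 - u) * γ ((1 - u)⁻¹ • w) < k * γ v := by
  have hgap : (k - (k - 1) * ε) * γ 0 < k * γ 0 := by
    have : 0 < (k - 1) * ε * γ 0 := by have := sub_pos.2 hk; positivity
    linarith
  filter_upwards [(hcont.tendsto.const_mul k).eventually_const_lt hgap] with v hv w u hu₀ hu
  exact (mul_add_one_sub_mul_le hk.le hε.le hu₀ hu (hmax _) (hmax _) hpos.le).trans_lt hv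

theorem sup_away_from_one_general (d : ℕ)
    (γ₁ : EuclideanSpace ℝ (Fin d) → ℝ)
    (hcont : Continuous γ₁)
    (hmax : ∀ v, γ₁ v ≤ γ₁ 0)
    (hpos : 0 < γ₁ 0)
    (k : ℕ) (hk : 2 ≤ k) (ε : ℝ) (hε : ε ∈ Set.Ioo (0 : ℝ) 1) :
    ∃ δ : ℝ, 0 < δ ∧ ∀ v : EuclideanSpace ℝ (Fin d), ‖v‖ < δ →
      ∀ w : EuclideanSpace ℝ (Fin d), ∀ u : ℝ, 0 ≤ u → u < 1 - ε →
        (k : ℝ) * u * γ₁ (u⁻¹ • (v - w)) + (1 - u) * γ₁ ((1 - u)⁻¹ • w)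
          < k * γ₁ v := by
  have hk' : (1 : ℝ) < k := by exact_mod_cast hk
  obtain ⟨δ, hδ, hball⟩ := Metric.eventually_nhds_iff.1
    (eventually_mul_add_one_sub_mul_lt hcont.continuousAt hmax hpos hk' hε.1)
  exact ⟨δ, hδ, fun v hv => hball (by rwa [dist_zero_right])⟩

/-- (Lemma 5.5) For `γ₁` continuous with strict unique maximum at `0`, `γ₁ 0 > 0`,
`k ≥ 2` and `ε ∈ (0,1)`, there is `δ > 0` such that for `‖v‖ < δ`, all `w`, and all
`u ∈ [0, 1−ε)`: `k u γ₁((v−w)/u) + (1−u) γ₁(w/(1−u)) < k γ₁ v` (the first term being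
`0` when `u = 0`, as `0 * γ₁(0 • _) = 0`). -/
theorem sup_away_from_one (d : ℕ)
    (γ₁ : EuclideanSpace ℝ (Fin d) → ℝ)
    (hcont : Continuous γ₁)
    (hmax : ∀ v, γ₁ v ≤ γ₁ 0)
    (hstrict : ∀ v, v ≠ 0 → γ₁ v < γ₁ 0)
    (hpos : 0 < γ₁ 0)
    (k : ℕ) (hk : 2 ≤ k) (ε : ℝ) (hε : ε ∈ Set.Ioo (0 : ℝ) 1) :
    ∃ δ : ℝ, 0 < δ ∧ ∀ v : EuclideanSpace ℝ (Fin d), ‖v‖ < δ →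
      ∀ w : EuclideanSpace ℝ (Fin d), ∀ u : ℝ, 0 ≤ u → u < 1 - ε →
        (k : ℝ) * u * γ₁ (u⁻¹ • (v - w)) + (1 - u) * γ₁ ((1 - u)⁻¹ • w)
          < k * γ₁ v :=
  sup_away_from_one_general d γ₁ hcont hmax hpos k hk ε hε
end

section
/- Let Φ : ℝ^d → ℝ be C² with ∇Φ(0) = 0, Φ(0) = −μ < 0, and with Hessian bounds c₁‖v‖² ≤ ⟨D²Φ(w)v, v⟩ ≤ c₂‖v‖² for all ‖w‖ ≤ m and all v. Let r, r̄ : ℝ^+ → ℝ^+ satisfy r(t) = o(r̄(t)), r̄(t) = o(t), and √t / r̄(t) → 0. Then exp(t·Φ(y(t)/t) − t·Φ(ȳ(t)/t)) → 0 as t → ∞, uniformly over ‖y(t)‖ ≤ r(t) and ‖ȳ(t)‖ ≥ r̄(t). -/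
/-!
Along the segment from `0` to `w`, the Hessian bounds make `s ↦ Φ (s • w)` a function with
vanishing slope at `0` and second derivative between `c₁ ‖w‖²` and `c₂ ‖w‖²`, so
`c₁ ‖w‖² / 2 ≤ Φ w - Φ 0 ≤ c₂ ‖w‖² / 2` for `‖w‖ ≤ m`; beyond radius `m` coercivity gives
`Φ w - Φ 0 ≥ c`. Scaling by `t`, the exponent is at most `c₂ r² / 2t - min (c t) (c₁ r̄² / 2t)`.
Both `c₂ r² / 2t - c t` and `c₂ r² / 2t - c₁ r̄² / 2t` tend to `-∞`: `r² / t = o(t)` and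
`r² / t = o(r̄² / t)`, while `r̄² / t → ∞` because `√t / r̄ → 0`.
-/
open Real Filter Topology Asymptotics
open Set InnerProductSpace
open scoped RealInnerProductSpace

lemma monotoneOn_Icc_of_hasDerivAt_nonneg {F F' : ℝ → ℝ} {a b : ℝ}
    (hF : ∀ s, HasDerivAt F (F' s) s) (hF' : ∀ s ∈ Icc a b, 0 ≤ F' s) :
    MonotoneOn F (Icc a b) :=
  monotoneOn_of_hasDerivWithinAt_nonneg (convex_Icc a b)
    (fun s _ => (hF s).continuousAt.continuousWithinAt) (fun s _ => (hF s).hasDerivWithinAt)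
    (fun s hs => hF' s (interior_subset hs))

lemma half_le_sub_of_le_second_deriv {g g' g'' : ℝ → ℝ} {a : ℝ}
    (hg : ∀ s, HasDerivAt g (g' s) s) (hg' : ∀ s, HasDerivAt g' (g'' s) s) (hg'0 : g' 0 = 0)
    (ha : ∀ s ∈ Icc (0 : ℝ) 1, a ≤ g'' s) : a / 2 ≤ g 1 - g 0 := by
  have hslope : ∀ s ∈ Icc (0 : ℝ) 1, a * s ≤ g' s := by
    intro s hs
    have := monotoneOn_Icc_of_hasDerivAt_nonneg (F := fun s => g' s - a * s)
      (fun s => ((hg' s).sub ((hasDerivAt_id s).const_mul a)).congr_deriv (by simp))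
      (fun s hs => sub_nonneg.2 (ha s hs)) (left_mem_Icc.2 zero_le_one) hs hs.1
    simp only [hg'0, mul_zero, sub_zero] at this
    linarith
  have := monotoneOn_Icc_of_hasDerivAt_nonneg (F := fun s => g s - a * (s ^ 2 / 2))
    (fun s => ((hg s).sub (((hasDerivAt_pow 2 s).div_const 2).const_mul a)).congr_deriv
      (by simp))
    (fun s hs => sub_nonneg.2 (hslope s hs))
    (left_mem_Icc.2 zero_le_one) (right_mem_Icc.2 zero_le_one) zero_le_one
  norm_num at this
  linarith

lemma sub_le_half_of_second_deriv_le {g g' g'' : ℝ → ℝ} {b : ℝ}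
    (hg : ∀ s, HasDerivAt g (g' s) s) (hg' : ∀ s, HasDerivAt g' (g'' s) s) (hg'0 : g' 0 = 0)
    (hb : ∀ s ∈ Icc (0 : ℝ) 1, g'' s ≤ b) : g 1 - g 0 ≤ b / 2 := by
  have := half_le_sub_of_le_second_deriv (fun s => (hg s).neg) (fun s => (hg' s).neg)
    (by simp [hg'0]) (fun s hs => neg_le_neg (hb s hs))
  simp only [Pi.neg_apply] at this
  linarith

lemma hasDerivAt_smul_const_self {E : Type*} [NormedAddCommGroup E] [NormedSpace ℝ E]
    (w : E) (s : ℝ) : HasDerivAt (fun u : ℝ => u • w) w s := by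
  simpa using (hasDerivAt_id s).smul_const w

lemma norm_smul_le_of_mem_Icc {E : Type*} [NormedAddCommGroup E] [NormedSpace ℝ E] {s : ℝ}
    (hs : s ∈ Icc (0 : ℝ) 1) (w : E) : ‖s • w‖ ≤ ‖w‖ := by
  rw [norm_smul, norm_of_nonneg hs.1]
  exact mul_le_of_le_one_left (norm_nonneg w) hs.2

section Hessian

variable {E : Type*} [NormedAddCommGroup E] [InnerProductSpace ℝ E] [CompleteSpace E]

lemma ContDiff.differentiable_gradient {f : E → ℝ} (hf : ContDiff ℝ 2 f) :
    Differentiable ℝ (gradient f) :=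
  (toDual ℝ E).symm.toContinuousLinearEquiv.differentiable.comp
    ((hf.fderiv_right (m := 1) (by norm_num)).differentiable one_ne_zero)

lemma DifferentiableAt.hasDerivAt_apply_smul {f : E → ℝ} {w : E} {s : ℝ}
    (hf : DifferentiableAt ℝ f (s • w)) :
    HasDerivAt (fun u : ℝ => f (u • w)) ⟪w, gradient f (s • w)⟫_ℝ s :=
  (hf.hasGradientAt.hasFDerivAt.comp_hasDerivAt s (hasDerivAt_smul_const_self w s)).congr_deriv
    (by simp)

lemma DifferentiableAt.hasDerivAt_inner_gradient_apply_smul {f : E → ℝ} {w : E} {s : ℝ}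
    (hf : DifferentiableAt ℝ (gradient f) (s • w)) :
    HasDerivAt (fun u : ℝ => ⟪w, gradient f (u • w)⟫_ℝ)
      ⟪w, fderiv ℝ (gradient f) (s • w) w⟫_ℝ s :=
  (innerSL ℝ w).hasFDerivAt.comp_hasDerivAt s
    (hf.hasFDerivAt.comp_hasDerivAt s (hasDerivAt_smul_const_self w s) :)

variable {f : E → ℝ}

lemma half_mul_sq_norm_le_sub_of_le_hessian (hf : ContDiff ℝ 2 f) (hf0 : gradient f 0 = 0)
    {a : ℝ} {w : E}
    (ha : ∀ s ∈ Icc (0 : ℝ) 1, a * ‖w‖ ^ 2 ≤ ⟪w, fderiv ℝ (gradient f) (s • w) w⟫_ℝ) :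
    a / 2 * ‖w‖ ^ 2 ≤ f w - f 0 := by
  have := half_le_sub_of_le_second_deriv
    (fun s => (hf.differentiable (by norm_num) _).hasDerivAt_apply_smul (w := w))
    (fun s => (hf.differentiable_gradient _).hasDerivAt_inner_gradient_apply_smul)
    (by simp [hf0]) ha
  simp only [one_smul, zero_smul] at this
  linarith

lemma sub_le_half_mul_sq_norm_of_hessian_le (hf : ContDiff ℝ 2 f) (hf0 : gradient f 0 = 0)
    {b : ℝ} {w : E}
    (hb : ∀ s ∈ Icc (0 : ℝ) 1, ⟪w, fderiv ℝ (gradient f) (s • w) w⟫_ℝ ≤ b * ‖w‖ ^ 2) :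
    f w - f 0 ≤ b / 2 * ‖w‖ ^ 2 := by
  have := sub_le_half_of_second_deriv_le
    (fun s => (hf.differentiable (by norm_num) _).hasDerivAt_apply_smul (w := w))
    (fun s => (hf.differentiable_gradient _).hasDerivAt_inner_gradient_apply_smul)
    (by simp [hf0]) hb
  simp only [one_smul, zero_smul] at this
  linarith

lemma sub_le_half_mul_sq_norm_of_hessian_le_of_norm_le (hf : ContDiff ℝ 2 f)
    (hf0 : gradient f 0 = 0) {m b : ℝ}
    (hb : ∀ x : E, ‖x‖ ≤ m → ∀ v, ⟪v, fderiv ℝ (gradient f) x v⟫_ℝ ≤ b * ‖v‖ ^ 2)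
    {w : E} (hw : ‖w‖ ≤ m) : f w - f 0 ≤ b / 2 * ‖w‖ ^ 2 :=
  sub_le_half_mul_sq_norm_of_hessian_le hf hf0
    fun _ hs => hb _ ((norm_smul_le_of_mem_Icc hs w).trans hw) w

lemma min_le_sub_of_le_hessian_of_coercive (hf : ContDiff ℝ 2 f) (hf0 : gradient f 0 = 0)
    {m a c : ℝ} (ha : ∀ x : E, ‖x‖ ≤ m → ∀ v, a * ‖v‖ ^ 2 ≤ ⟪v, fderiv ℝ (gradient f) x v⟫_ℝ)
    (hcoer : ∀ v : E, m ≤ ‖v‖ → c ≤ f v - f 0) (w : E) :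
    min c (a / 2 * ‖w‖ ^ 2) ≤ f w - f 0 := by
  rcases le_total m ‖w‖ with hmw | hwm
  · exact (min_le_left _ _).trans (hcoer w hmw)
  · exact (min_le_right _ _).trans <| half_mul_sq_norm_le_sub_of_le_hessian hf hf0
      fun _ hs => ha _ ((norm_smul_le_of_mem_Icc hs w).trans hwm) w

end Hessian

lemma mul_sub_le_max_of_quadratic_growth {E : Type*} [NormedAddCommGroup E] [NormedSpace ℝ E]
    {Φ : E → ℝ} {m a b c t R Rbar : ℝ} {y ybar : E}
    (hup : ∀ w, ‖w‖ ≤ m → Φ w - Φ 0 ≤ b / 2 * ‖w‖ ^ 2)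
    (hlow : ∀ w, min c (a / 2 * ‖w‖ ^ 2) ≤ Φ w - Φ 0) (ha : 0 ≤ a) (hb : 0 ≤ b) (ht : 0 < t)
    (hy : ‖y‖ ≤ R) (hRm : R ≤ m * t) (hRbar : 0 ≤ Rbar) (hybar : Rbar ≤ ‖ybar‖) :
    t * Φ (t⁻¹ • y) - t * Φ (t⁻¹ • ybar) ≤
      max (b / 2 * (R ^ 2 / t) - c * t) (b / 2 * (R ^ 2 / t) - a / 2 * (Rbar ^ 2 / t)) := by
  have hnorm : ∀ z : E, ‖t⁻¹ • z‖ = ‖z‖ / t := fun z => by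
    rw [norm_smul, norm_inv, norm_of_nonneg ht.le, inv_mul_eq_div]
  have hscale : ∀ z : E, t * ‖t⁻¹ • z‖ ^ 2 = ‖z‖ ^ 2 / t := fun z => by
    rw [hnorm]; field_simp
  have hA : t * (Φ (t⁻¹ • y) - Φ 0) ≤ b / 2 * (R ^ 2 / t) :=
    calc t * (Φ (t⁻¹ • y) - Φ 0) ≤ t * (b / 2 * ‖t⁻¹ • y‖ ^ 2) := by
          refine mul_le_mul_of_nonneg_left (hup _ ?_) ht.le
          rw [hnorm, div_le_iff₀ ht]
          exact hy.trans hRm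
      _ = b / 2 * (‖y‖ ^ 2 / t) := by rw [← hscale]; ring
      _ ≤ b / 2 * (R ^ 2 / t) := by gcongr
  have hB : min (c * t) (a / 2 * (Rbar ^ 2 / t)) ≤ t * (Φ (t⁻¹ • ybar) - Φ 0) :=
    calc min (c * t) (a / 2 * (Rbar ^ 2 / t)) ≤ min (c * t) (a / 2 * (‖ybar‖ ^ 2 / t)) := by
          gcongr
      _ = t * min c (a / 2 * ‖t⁻¹ • ybar‖ ^ 2) := by
          rw [mul_min_of_nonneg _ _ ht.le, mul_comm t c, mul_left_comm, hscale]
      _ ≤ t * (Φ (t⁻¹ • ybar) - Φ 0) := mul_le_mul_of_nonneg_left (hlow _) ht.le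
  rcases min_cases (c * t) (a / 2 * (Rbar ^ 2 / t)) with ⟨hmin, -⟩ | ⟨hmin, -⟩ <;>
    rw [hmin] at hB
  · exact le_max_of_le_left (by linarith)
  · exact le_max_of_le_right (by linarith)

lemma Asymptotics.IsLittleO.tendsto_sub_const_mul_atBot {α : Type*} {l : Filter α}
    {u v : α → ℝ} (huv : u =o[l] v) (hv : Tendsto v l atTop) {a : ℝ} (ha : 0 < a) :
    Tendsto (fun x => u x - a * v x) l atBot := by
  refine tendsto_atBot_mono' l ?_ (hv.const_mul_atTop_of_neg (neg_lt_zero.2 (half_pos ha)))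
  filter_upwards [huv.def (half_pos ha), hv.eventually_ge_atTop 0] with x hx hv0
  rw [norm_of_nonneg hv0, Real.norm_eq_abs] at hx
  linarith [le_abs_self (u x)]

lemma Asymptotics.IsLittleO.sq_div {α : Type*} {l : Filter α} {f g : α → ℝ} (h : f =o[l] g)
    (k : α → ℝ) : (fun x => f x ^ 2 / k x) =o[l] (fun x => g x ^ 2 / k x) := by
  simpa only [div_eq_mul_inv] using (h.pow two_pos).mul_isBigO (isBigO_refl (fun x => (k x)⁻¹) l)

lemma Asymptotics.IsLittleO.sq_div_self {f : ℝ → ℝ} (h : f =o[atTop] fun t => t) :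
    (fun t => f t ^ 2 / t) =o[atTop] fun t => t :=
  (h.sq_div fun t => t).congr' EventuallyEq.rfl <| by
    filter_upwards [eventually_ne_atTop 0] with t ht
    field_simp

lemma tendsto_sq_div_atTop_of_tendsto_sqrt_div {f : ℝ → ℝ} (hf : ∀ᶠ t in atTop, 0 < f t)
    (h : Tendsto (fun t => √t / f t) atTop (𝓝 0)) :
    Tendsto (fun t => f t ^ 2 / t) atTop atTop := by
  have hsq : Tendsto (fun t => (√t / f t) ^ 2) atTop (𝓝[>] 0) := by
    refine tendsto_nhdsWithin_iff.2 ⟨by simpa using h.pow 2, ?_⟩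
    filter_upwards [hf, eventually_gt_atTop 0] with t hft ht
    exact pow_pos (div_pos (sqrt_pos.2 ht) hft) 2
  refine hsq.inv_tendsto_nhdsGT_zero.congr' ?_
  filter_upwards [eventually_gt_atTop 0] with t ht
  simp [div_pow, sq_sqrt ht.le]

theorem exp_ratio_tendsto_zero_general (d : ℕ)
    (Φ : EuclideanSpace ℝ (Fin d) → ℝ)
    (hΦ : ContDiff ℝ 2 Φ)
    (hgrad0 : gradient Φ 0 = 0)
    (m c₁ c₂ : ℝ) (hm : 0 < m) (hc₁ : 0 < c₁) (hc₁₂ : c₁ ≤ c₂)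
    (hhess : ∀ w : EuclideanSpace ℝ (Fin d), ‖w‖ ≤ m →
      ∀ v : EuclideanSpace ℝ (Fin d),
        c₁ * ‖v‖ ^ 2 ≤ (inner ℝ v (fderiv ℝ (gradient Φ) w v) : ℝ) ∧
        (inner ℝ v (fderiv ℝ (gradient Φ) w v) : ℝ) ≤ c₂ * ‖v‖ ^ 2)
    (c : ℝ) (hc : 0 < c)
    (hcoer : ∀ v : EuclideanSpace ℝ (Fin d), m ≤ ‖v‖ → c ≤ Φ v - Φ 0)
    (r rbar : ℝ → ℝ)
    (hrbarpos : ∀ t > 0, 0 < rbar t)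
    (hr : r =o[atTop] rbar)
    (hrbar : rbar =o[atTop] (fun t => t))
    (hsqrt : Tendsto (fun t => Real.sqrt t / rbar t) atTop (𝓝 0)) :
    ∀ ε : ℝ, 0 < ε → ∃ T : ℝ, ∀ t ≥ T,
      ∀ y ybar : EuclideanSpace ℝ (Fin d), ‖y‖ ≤ r t → rbar t ≤ ‖ybar‖ →
        Real.exp (t * Φ (t⁻¹ • y) - t * Φ (t⁻¹ • ybar)) ≤ ε := by
  intro ε hε
  have hrt : r =o[atTop] fun t => t := hr.trans hrbar
  have hcoercive := ((hrt.sq_div_self).const_mul_left (c₂ / 2)).tendsto_sub_const_mul_atBot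
    tendsto_id hc
  have hquadratic := ((hr.sq_div fun t => t).const_mul_left (c₂ / 2)).tendsto_sub_const_mul_atBot
    (tendsto_sq_div_atTop_of_tendsto_sqrt_div ((eventually_gt_atTop 0).mono hrbarpos) hsqrt)
    (half_pos hc₁)
  obtain ⟨T, hT⟩ := eventually_atTop.1 <| (eventually_gt_atTop 0).and <| (hrt.def hm).and <|
    (hcoercive.eventually_le_atBot (log ε)).and (hquadratic.eventually_le_atBot (log ε))
  refine ⟨T, fun t ht y ybar hy hybar => ?_⟩
  obtain ⟨htpos, hrm, hcoercive_t, hquadratic_t⟩ := hT t ht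
  rw [norm_of_nonneg htpos.le] at hrm
  rw [← exp_log hε, exp_le_exp]
  refine (mul_sub_le_max_of_quadratic_growth
    (fun w hw => sub_le_half_mul_sq_norm_of_hessian_le_of_norm_le hΦ hgrad0
      (fun x hx v => (hhess x hx v).2) hw)
    (min_le_sub_of_le_hessian_of_coercive hΦ hgrad0 (fun x hx v => (hhess x hx v).1) hcoer)
    hc₁.le (hc₁.trans_le hc₁₂).le htpos hy ((le_norm_self _).trans hrm) (hrbarpos t htpos).le
    hybar).trans (max_le hcoercive_t hquadratic_t)

/-- Gaussian domination at sublinear scales: under the stated Hessian bounds and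
coercivity of `Φ`, `exp(tΦ(y(t)/t) − tΦ(ȳ(t)/t)) → 0` uniformly over
`‖y(t)‖ ≤ r(t)` and `‖ȳ(t)‖ ≥ r̄(t)`. -/
theorem exp_ratio_tendsto_zero (d : ℕ)
    (Φ : EuclideanSpace ℝ (Fin d) → ℝ)
    (hΦ : ContDiff ℝ 2 Φ)
    (hgrad0 : gradient Φ 0 = 0)
    (μ : ℝ) (hμ : 0 < μ) (hΦ0 : Φ 0 = -μ)
    (m c₁ c₂ : ℝ) (hm : 0 < m) (hc₁ : 0 < c₁) (hc₁₂ : c₁ ≤ c₂)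
    (hhess : ∀ w : EuclideanSpace ℝ (Fin d), ‖w‖ ≤ m →
      ∀ v : EuclideanSpace ℝ (Fin d),
        c₁ * ‖v‖ ^ 2 ≤ (inner ℝ v (fderiv ℝ (gradient Φ) w v) : ℝ) ∧
        (inner ℝ v (fderiv ℝ (gradient Φ) w v) : ℝ) ≤ c₂ * ‖v‖ ^ 2)
    (c : ℝ) (hc : 0 < c)
    (hcoer : ∀ v : EuclideanSpace ℝ (Fin d), m ≤ ‖v‖ → c ≤ Φ v - Φ 0)
    (r rbar : ℝ → ℝ)
    (hrpos : ∀ t > 0, 0 < r t) (hrbarpos : ∀ t > 0, 0 < rbar t)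
    (hr : r =o[atTop] rbar)
    (hrbar : rbar =o[atTop] (fun t => t))
    (hsqrt : Tendsto (fun t => Real.sqrt t / rbar t) atTop (𝓝 0)) :
    ∀ ε : ℝ, 0 < ε → ∃ T : ℝ, ∀ t ≥ T,
      ∀ y ybar : EuclideanSpace ℝ (Fin d), ‖y‖ ≤ r t → rbar t ≤ ‖ybar‖ →
        Real.exp (t * Φ (t⁻¹ • y) - t * Φ (t⁻¹ • ybar)) ≤ ε :=
  exp_ratio_tendsto_zero_general d Φ hΦ hgrad0 m c₁ c₂ hm hc₁ hc₁₂ hhess c hc hcoer r rbar hrbarpos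
    hr hrbar hsqrt
end

section
/- Suppose u(t,x,y) satisfies the Gaussian upper bound u(t,x,y) ≤ c·t^{-d/2}·exp(μt − ‖y−x‖²/(ct)) for all t > 0 and x,y ∈ ℝ^d (with c, μ > 0), and suppose m_k and m_{k-i}, m_i for 1 ≤ i ≤ k−1 each satisfy bounds of the form a·exp(at − ‖y−x‖²/(a(t+1))). Then the Duhamel convolution m_k(t,x,y) = ∫₀^t ∫_{ℝ^d} α(z)·h(s,z,y)·u(t−s,x,z) dz ds, where α is bounded and h(s,z,y) ≤ ã·exp(ãs − ‖y−z‖²/(ã(s+1))), satisfies a bound of the same form: m_k(t,x,y) ≤ a_k·exp(a_k t − ‖y−x‖²/(a_k(t+1))) for some a_k > 0. -/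
open Real MeasureTheory

/-!
For `0 < s < t` write `τ = t - s`. By `‖y - x‖² ≤ 2‖y - z‖² + 2‖z - x‖²`, the Gaussian factors
`exp (-‖y - z‖² / (ã (s + 1)))` of `h` and one half of `exp (-‖z - x‖² / (c τ))` of `u` together
are at most `exp (-‖y - x‖² / (4 (ã + c) (t + 1)))`. The remaining half integrates in `z` to
`(2π c τ)^(d/2)`, which cancels the singular factor `τ^(-d/2)`. The inner integral is therefore
bounded uniformly in `s`, and the factor `t` coming from the `s`-integral is absorbed by `exp t`.
-/

section Gaussian

variable {V : Type*} [NormedAddCommGroup V] [InnerProductSpace ℝ V] [FiniteDimensional ℝ V]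
  [MeasurableSpace V] [BorelSpace V]

theorem integral_exp_neg_norm_sub_sq_div {b : ℝ} (hb : 0 < b) (x : V) :
    ∫ z : V, exp (-‖z - x‖ ^ 2 / b) = (π * b) ^ (Module.finrank ℝ V / 2 : ℝ) := by
  have h := GaussianFourier.integral_rexp_neg_mul_sq_norm (V := V) (inv_pos.2 hb)
  rw [div_inv_eq_mul] at h
  rw [integral_sub_right_eq_self (fun z : V => exp (-‖z‖ ^ 2 / b)) x, ← h]
  simp only [div_eq_inv_mul, neg_mul, mul_neg]

theorem integrable_exp_neg_norm_sub_sq_div {b : ℝ} (hb : 0 < b) (x : V) :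
    Integrable fun z : V => exp (-‖z - x‖ ^ 2 / b) :=
  .of_integral_ne_zero (by rw [integral_exp_neg_norm_sub_sq_div hb]; positivity)

end Gaussian

section Split

variable {E : Type*} [SeminormedAddCommGroup E]

theorem norm_sub_sq_le_two_mul_add (x y z : E) :
    ‖y - x‖ ^ 2 ≤ 2 * ‖y - z‖ ^ 2 + 2 * ‖z - x‖ ^ 2 := by
  have := norm_sub_le_norm_sub_add_norm_sub y z x
  nlinarith [norm_nonneg (y - x), sq_nonneg (‖y - z‖ - ‖z - x‖)]

theorem norm_sub_sq_div_add_le {a b L : ℝ} (ha : 0 < a) (hb : 0 < b) (haL : a ≤ L) (hbL : b ≤ L)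
    (x y z : E) :
    ‖y - x‖ ^ 2 / (4 * L) + ‖z - x‖ ^ 2 / (2 * b) ≤ ‖y - z‖ ^ 2 / a + ‖z - x‖ ^ 2 / b := by
  have hL : 0 < L := ha.trans_le haL
  have h₁ : ‖y - z‖ ^ 2 / (2 * L) ≤ ‖y - z‖ ^ 2 / a :=
    div_le_div_of_nonneg_left (by positivity) ha (by linarith)
  have h₂ : ‖z - x‖ ^ 2 / (2 * L) ≤ ‖z - x‖ ^ 2 / (2 * b) :=
    div_le_div_of_nonneg_left (by positivity) (by positivity) (by linarith)
  have h₃ : ‖y - x‖ ^ 2 / (4 * L) ≤ ‖y - z‖ ^ 2 / (2 * L) + ‖z - x‖ ^ 2 / (2 * L) := by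
    rw [← add_div, div_le_div_iff₀ (by positivity) (by positivity)]
    nlinarith [norm_sub_sq_le_two_mul_add x y z]
  have h₄ : ‖z - x‖ ^ 2 / b = ‖z - x‖ ^ 2 / (2 * b) + ‖z - x‖ ^ 2 / (2 * b) := by
    field_simp; ring
  linarith

end Split

theorem setIntegral_Ioc_le_mul {f : ℝ → ℝ} {a b K : ℝ} (hab : a ≤ b)
    (hf0 : ∀ s ∈ Set.Ioo a b, 0 ≤ f s) (hfK : ∀ s ∈ Set.Ioo a b, f s ≤ K) :
    ∫ s in Set.Ioc a b, f s ≤ (b - a) * K := by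
  rw [integral_Ioc_eq_integral_Ioo]
  calc ∫ s in Set.Ioo a b, f s ≤ ∫ _ in Set.Ioo a b, K :=
        integral_mono_of_nonneg (ae_restrict_of_forall_mem measurableSet_Ioo hf0)
          (integrableOn_const measure_Ioo_lt_top.ne)
          (ae_restrict_of_forall_mem measurableSet_Ioo hfK)
    _ = (b - a) * K := by simp [hab]

theorem mul_mul_exp_le_of_le {t C ν L q A : ℝ} (ht : 0 ≤ t) (hq : 0 ≤ q) (hL : 0 < L)
    (hC0 : 0 ≤ C) (hCA : C ≤ A) (hνA : ν + 1 ≤ A) (hLA : L ≤ A) :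
    t * (C * exp (ν * t - q / (L * (t + 1)))) ≤ A * exp (A * t - q / (A * (t + 1))) :=
  calc t * (C * exp (ν * t - q / (L * (t + 1))))
      ≤ exp t * (C * exp (ν * t - q / (L * (t + 1)))) := by
        gcongr; linarith [add_one_le_exp t]
    _ = C * exp ((ν + 1) * t - q / (L * (t + 1))) := by
        rw [mul_left_comm, ← exp_add]; ring_nf
    _ ≤ A * exp (A * t - q / (A * (t + 1))) := by
        have := hC0.trans hCA
        gcongr

def HasAronsonBound {E : Type*} [SeminormedAddCommGroup E] (A : ℝ) (m : ℝ → E → E → ℝ) : Prop :=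
  ∀ t : ℝ, 0 < t → ∀ x y, m t x y ≤ A * exp (A * t - ‖y - x‖ ^ 2 / (A * (t + 1)))

section HeatKernel

variable {V : Type*} [NormedAddCommGroup V] [NormedSpace ℝ V]

def HasHeatKernelBound (c μ : ℝ) (u : ℝ → V → V → ℝ) : Prop :=
  ∀ t : ℝ, 0 < t → ∀ x y,
    u t x y ≤ c * t ^ (-(Module.finrank ℝ V : ℝ) / 2) * exp (μ * t - ‖y - x‖ ^ 2 / (c * t))

variable {u h : ℝ → V → V → ℝ} {α : V → ℝ} {c μ a B : ℝ}

theorem duhamel_integrand_le (hc : 0 < c) (ha : 0 < a) (hu : HasHeatKernelBound c μ u)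
    (hh0 : ∀ s z y, 0 ≤ h s z y) (hh : HasAronsonBound a h) (hα0 : ∀ z, 0 ≤ α z)
    (hαB : ∀ z, α z ≤ B) {s t : ℝ} (hs : 0 < s) (hst : s < t) (x y z : V) :
    α z * h s z y * u (t - s) x z ≤
      B * a * c * (t - s) ^ (-(Module.finrank ℝ V : ℝ) / 2) *
        exp (a * s + μ * (t - s) - ‖y - x‖ ^ 2 / (4 * (a + c) * (t + 1))) *
        exp (-‖z - x‖ ^ 2 / (2 * (c * (t - s)))) := by
  set τ := t - s
  set n := (Module.finrank ℝ V : ℝ)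
  have hτ : 0 < τ := sub_pos.2 hst
  have hB : 0 ≤ B := (hα0 z).trans (hαB z)
  have hexp : (a * s - ‖y - z‖ ^ 2 / (a * (s + 1))) + (μ * τ - ‖z - x‖ ^ 2 / (c * τ)) ≤
      (a * s + μ * τ - ‖y - x‖ ^ 2 / (4 * (a + c) * (t + 1))) +
        -‖z - x‖ ^ 2 / (2 * (c * τ)) := by
    have := norm_sub_sq_div_add_le (L := (a + c) * (t + 1)) (by positivity : 0 < a * (s + 1))
      (by positivity : 0 < c * τ) (by nlinarith) (by nlinarith) x y z
    rw [← mul_assoc] at this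
    rw [neg_div]
    linarith
  calc α z * h s z y * u τ x z
      ≤ α z * h s z y * (c * τ ^ (-n / 2) * exp (μ * τ - ‖z - x‖ ^ 2 / (c * τ))) :=
        mul_le_mul_of_nonneg_left (hu τ hτ x z) (mul_nonneg (hα0 z) (hh0 s z y))
    _ ≤ B * (a * exp (a * s - ‖y - z‖ ^ 2 / (a * (s + 1)))) *
          (c * τ ^ (-n / 2) * exp (μ * τ - ‖z - x‖ ^ 2 / (c * τ))) :=
        mul_le_mul_of_nonneg_right (mul_le_mul (hαB z) (hh s hs z y) (hh0 s z y) hB)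
          (by positivity)
    _ = B * a * c * τ ^ (-n / 2) * exp ((a * s - ‖y - z‖ ^ 2 / (a * (s + 1))) +
          (μ * τ - ‖z - x‖ ^ 2 / (c * τ))) := by
        rw [exp_add]; ring
    _ ≤ B * a * c * τ ^ (-n / 2) * exp ((a * s + μ * τ - ‖y - x‖ ^ 2 / (4 * (a + c) * (t + 1))) +
          -‖z - x‖ ^ 2 / (2 * (c * τ))) := by
        gcongr
    _ = _ := by rw [exp_add]; ring

end HeatKernel

section Duhamel

variable {V : Type*} [NormedAddCommGroup V] [InnerProductSpace ℝ V] [FiniteDimensional ℝ V]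
  [MeasurableSpace V] [BorelSpace V]

noncomputable def duhamel (α : V → ℝ) (h u : ℝ → V → V → ℝ) (t : ℝ) (x y : V) : ℝ :=
  ∫ s in Set.Ioc 0 t, ∫ z, α z * h s z y * u (t - s) x z

variable {u h : ℝ → V → V → ℝ} {α : V → ℝ} {c μ a B : ℝ}

theorem integral_duhamel_integrand_le (hc : 0 < c) (ha : 0 < a)
    (hu0 : ∀ t x y, 0 ≤ u t x y) (hu : HasHeatKernelBound c μ u)
    (hh0 : ∀ s z y, 0 ≤ h s z y) (hh : HasAronsonBound a h) (hα0 : ∀ z, 0 ≤ α z)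
    (hαB : ∀ z, α z ≤ B) {s t : ℝ} (hs : 0 < s) (hst : s < t) (x y : V) :
    ∫ z, α z * h s z y * u (t - s) x z ≤
      B * a * c * (2 * π * c) ^ (Module.finrank ℝ V / 2 : ℝ) *
        exp ((a + |μ|) * t - ‖y - x‖ ^ 2 / (4 * (a + c) * (t + 1))) := by
  set n := (Module.finrank ℝ V : ℝ)
  set Q := ‖y - x‖ ^ 2 / (4 * (a + c) * (t + 1))
  have hτ : 0 < t - s := sub_pos.2 hst
  have hB : 0 ≤ B := (hα0 0).trans (hαB 0)
  have hcancel : (t - s) ^ (-n / 2) * (t - s) ^ (n / 2) = 1 := by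
    rw [neg_div, rpow_neg hτ.le, inv_mul_cancel₀ (by positivity)]
  calc ∫ z, α z * h s z y * u (t - s) x z
      ≤ ∫ z, B * a * c * (t - s) ^ (-n / 2) * exp (a * s + μ * (t - s) - Q) *
          exp (-‖z - x‖ ^ 2 / (2 * (c * (t - s)))) :=
        integral_mono_of_nonneg
          (ae_of_all _ fun z => mul_nonneg (mul_nonneg (hα0 z) (hh0 s z y)) (hu0 _ x z))
          ((integrable_exp_neg_norm_sub_sq_div (by positivity) x).const_mul _)
          (ae_of_all _ (duhamel_integrand_le hc ha hu hh0 hh hα0 hαB hs hst x y))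
    _ = B * a * c * (t - s) ^ (-n / 2) * exp (a * s + μ * (t - s) - Q) *
          ((2 * π * c) ^ (n / 2) * (t - s) ^ (n / 2)) := by
        rw [integral_const_mul, integral_exp_neg_norm_sub_sq_div (by positivity),
          show π * (2 * (c * (t - s))) = 2 * π * c * (t - s) by ring,
          mul_rpow (by positivity) hτ.le]
    _ = B * a * c * (2 * π * c) ^ (n / 2) * exp (a * s + μ * (t - s) - Q) := by
        linear_combination (B * a * c * (2 * π * c) ^ (n / 2) * exp (a * s + μ * (t - s) - Q)) *
          hcancel
    _ ≤ B * a * c * (2 * π * c) ^ (n / 2) * exp ((a + |μ|) * t - Q) := by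
        gcongr
        nlinarith [le_abs_self μ, abs_nonneg μ]

theorem HasAronsonBound.duhamel (hc : 0 < c) (ha : 0 < a)
    (hu0 : ∀ t x y, 0 ≤ u t x y) (hu : HasHeatKernelBound c μ u)
    (hh0 : ∀ s z y, 0 ≤ h s z y) (hh : HasAronsonBound a h) (hα0 : ∀ z, 0 ≤ α z)
    (hαB : ∀ z, α z ≤ B) :
    HasAronsonBound (B * a * c * (2 * π * c) ^ (Module.finrank ℝ V / 2 : ℝ) + a + |μ| + 1 +
      4 * (a + c)) (duhamel α h u) := by
  intro t ht x y
  have hB : 0 ≤ B := (hα0 0).trans (hαB 0)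
  have hC : 0 ≤ B * a * c * (2 * π * c) ^ (Module.finrank ℝ V / 2 : ℝ) := by positivity
  refine (setIntegral_Ioc_le_mul ht.le
    (fun s _ => integral_nonneg fun z => mul_nonneg (mul_nonneg (hα0 z) (hh0 s z y)) (hu0 _ x z))
    (fun s hs => integral_duhamel_integrand_le hc ha hu0 hu hh0 hh hα0 hαB hs.1 hs.2 x y)).trans ?_
  rw [sub_zero]
  exact mul_mul_exp_le_of_le ht.le (sq_nonneg _) (by positivity) (by positivity)
    (by linarith [abs_nonneg μ]) (by linarith) (by linarith [abs_nonneg μ])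

end Duhamel

theorem duhamel_gaussian_bound_general (d : ℕ)
    (u : ℝ → EuclideanSpace ℝ (Fin d) → EuclideanSpace ℝ (Fin d) → ℝ)
    (hunonneg : ∀ t x y, 0 ≤ u t x y)
    (c μ : ℝ) (hc : 0 < c)
    (hu : ∀ t : ℝ, 0 < t → ∀ x y,
      u t x y ≤ c * t ^ (-(d : ℝ) / 2) * Real.exp (μ * t - ‖y - x‖ ^ 2 / (c * t)))
    (h : ℝ → EuclideanSpace ℝ (Fin d) → EuclideanSpace ℝ (Fin d) → ℝ)
    (hhnonneg : ∀ s z y, 0 ≤ h s z y)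
    (atil : ℝ) (hatil : 0 < atil)
    (hh : ∀ s : ℝ, 0 < s → ∀ z y,
      h s z y ≤ atil * Real.exp (atil * s - ‖y - z‖ ^ 2 / (atil * (s + 1))))
    (α : EuclideanSpace ℝ (Fin d) → ℝ) (B : ℝ)
    (hα : ∀ z, 0 ≤ α z ∧ α z ≤ B)
    (mk : ℝ → EuclideanSpace ℝ (Fin d) → EuclideanSpace ℝ (Fin d) → ℝ)
    (hmk : ∀ t x y, mk t x y =
      ∫ s in Set.Ioc (0 : ℝ) t, (∫ z, α z * h s z y * u (t - s) x z)) :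
    ∃ ak : ℝ, 0 < ak ∧ ∀ t : ℝ, 0 < t → ∀ x y,
      mk t x y ≤ ak * Real.exp (ak * t - ‖y - x‖ ^ 2 / (ak * (t + 1))) := by
  have hu' : HasHeatKernelBound c μ u := by
    rwa [HasHeatKernelBound, finrank_euclideanSpace_fin]
  have hmk' : mk = duhamel α h u := funext fun t => funext fun x => funext (hmk t x)
  have hB : 0 ≤ B := (hα 0).1.trans (hα 0).2
  exact ⟨_, by positivity, hmk' ▸ HasAronsonBound.duhamel hc hatil hunonneg hu' hhnonneg hh
    (fun z => (hα z).1) (fun z => (hα z).2)⟩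

/-- Aronson-type Gaussian bounds are stable under the Duhamel time-space convolution:
if the kernel `u` and the source `h` satisfy Gaussian bounds, so does
`m_k(t,x,y) = ∫₀ᵗ ∫ α(z) h(s,z,y) u(t−s,x,z) dz ds`. -/
theorem duhamel_gaussian_bound (d : ℕ)
    (u : ℝ → EuclideanSpace ℝ (Fin d) → EuclideanSpace ℝ (Fin d) → ℝ)
    (hunonneg : ∀ t x y, 0 ≤ u t x y)
    (c μ : ℝ) (hc : 0 < c) (hμ : 0 < μ)
    (hu : ∀ t : ℝ, 0 < t → ∀ x y,
      u t x y ≤ c * t ^ (-(d : ℝ) / 2) * Real.exp (μ * t - ‖y - x‖ ^ 2 / (c * t)))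
    (h : ℝ → EuclideanSpace ℝ (Fin d) → EuclideanSpace ℝ (Fin d) → ℝ)
    (hhnonneg : ∀ s z y, 0 ≤ h s z y)
    (atil : ℝ) (hatil : 0 < atil)
    (hh : ∀ s : ℝ, 0 < s → ∀ z y,
      h s z y ≤ atil * Real.exp (atil * s - ‖y - z‖ ^ 2 / (atil * (s + 1))))
    (α : EuclideanSpace ℝ (Fin d) → ℝ) (B : ℝ)
    (hα : ∀ z, 0 ≤ α z ∧ α z ≤ B)
    (mk : ℝ → EuclideanSpace ℝ (Fin d) → EuclideanSpace ℝ (Fin d) → ℝ)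
    (hmk : ∀ t x y, mk t x y =
      ∫ s in Set.Ioc (0 : ℝ) t, (∫ z, α z * h s z y * u (t - s) x z)) :
    ∃ ak : ℝ, 0 < ak ∧ ∀ t : ℝ, 0 < t → ∀ x y,
      mk t x y ≤ ak * Real.exp (ak * t - ‖y - x‖ ^ 2 / (ak * (t + 1))) :=
  duhamel_gaussian_bound_general d u hunonneg c μ hc hu h hhnonneg atil hatil hh α B hα mk hmk
end
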